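/- Let i ≤ m, j ≤ n, let s be an LCS of A_i and B_j (so s has length k = L(i,j)), and let (p_1,q_1), ..., (p_k,q_k) be any embedding of s in (A_i, B_j). Then for every 1 ≤ t ≤ k, the match (p_t, q_t) has rank exactly t, i.e., L(p_t, q_t) = t. -/

import Mathlib

/-- `s` is a common subsequence of `A` and `B`. -/
def IsCommonSubseq {α : Type*} (A B s : List α) : Prop :=
  s.Sublist A ∧ s.Sublist B

/-- `lcsL A B i j` is the maximum length of a common subsequence of the
length-`i` prefix of `A` and the length-`j` prefix of `B`. -/
noncomputable def lcsL {α : Type*} (A B : List α) (i j : ℕ) : ℕ :=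
  sSup {k | ∃ s : List α, IsCommonSubseq (A.take i) (B.take j) s ∧ s.length = k}

/-- `s` is a longest common subsequence of the length-`i` prefix of `A` and
the length-`j` prefix of `B`. -/
def IsLCS {α : Type*} (A B : List α) (i j : ℕ) (s : List α) : Prop :=
  IsCommonSubseq (A.take i) (B.take j) s ∧ s.length = lcsL A B i j

/-- The (1-indexed) pair `(i, j)` is a match: `a_i = b_j`. -/
def IsMatch {α : Type*} (A B : List α) (i j : ℕ) : Prop :=
  1 ≤ i ∧ i ≤ A.length ∧ 1 ≤ j ∧ j ≤ B.length ∧ A[i - 1]? = B[j - 1]?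

/-- `e` is an embedding of the list `s` in the pair of prefixes `(A_i, B_j)`:
a sequence of (1-indexed) position pairs, strictly increasing in both
coordinates, lying in `[1..i] × [1..j]`, such that the `t`-th pair points at
occurrences of the `t`-th character of `s` in both strings. -/
def IsEmbedding {α : Type*} (A B : List α) (i j : ℕ) (s : List α)
    (e : List (ℕ × ℕ)) : Prop :=
  e.Chain' (fun u v => u.1 < v.1 ∧ u.2 < v.2) ∧
  (∀ u ∈ e, 1 ≤ u.1 ∧ u.1 ≤ i ∧ 1 ≤ u.2 ∧ u.2 ≤ j) ∧
  List.Forall₂ (fun (u : ℕ × ℕ) (c : α) =>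
    A[u.1 - 1]? = some c ∧ B[u.2 - 1]? = some c) e s

/-- The match `(i, j)` is antidominant of rank `r` within the rectangle
`[1..I] × [1..J]`. -/
def IsAntidominant {α : Type*} (A B : List α) (r I J i j : ℕ) : Prop :=
  IsMatch A B i j ∧ i ≤ I ∧ j ≤ J ∧ lcsL A B i j = r ∧
  ¬ ∃ i' j', IsMatch A B i' j' ∧ lcsL A B i' j' = r ∧
    ((i' = i ∧ j < j' ∧ j' ≤ J) ∨ (j' = j ∧ i < i' ∧ i' ≤ I))

/-- `e` is an antidominant backtrace for `(i, j)`: a sequence of matches of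
length `L(i,j)`, strictly increasing in both coordinates, such that (setting
the `(k+1)`-st entry to `(i+1, j+1)`) the `t`-th match is antidominant of rank
`t` within the rectangle determined by the `(t+1)`-st entry minus one. -/
def IsAntidominantBacktrace {α : Type*} (A B : List α) (i j : ℕ)
    (e : List (ℕ × ℕ)) : Prop :=
  e.length = lcsL A B i j ∧
  e.Chain' (fun u v => u.1 < v.1 ∧ u.2 < v.2) ∧
  ∀ t < e.length,
    IsAntidominant A B (t + 1)
      (((e ++ [(i + 1, j + 1)]).getD (t + 1) (0, 0)).1 - 1)
      (((e ++ [(i + 1, j + 1)]).getD (t + 1) (0, 0)).2 - 1)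
      (e.getD t (0, 0)).1 (e.getD t (0, 0)).2

/-!
The first `t` pairs of the embedding embed `s_1 ⋯ s_t` in `(A_{p_t}, B_{q_t})`, so
`L(p_t, q_t) ≥ t`. Conversely, the remaining pairs embed `s_{t+1} ⋯ s_k` strictly to the
right of and below `(p_t, q_t)`, so appending them to an LCS of `(A_{p_t}, B_{q_t})` gives a
common subsequence of `(A_i, B_j)` of length `L(p_t, q_t) + k - t`; maximality of `k` forces
`L(p_t, q_t) ≤ t`.
-/

namespace List

theorem sublist_drop_take_of_forall₂ {α β : Type*} {C : List α} {f : β → ℕ} {N : ℕ} :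
    ∀ {e : List β} {s : List α} {d : ℕ},
      Forall₂ (fun u c => C[f u - 1]? = some c) e s → e.Pairwise (f · < f ·) →
      (∀ u ∈ e, d < f u ∧ f u ≤ N) → s <+ (C.take N).drop d
  | _, _, _, .nil, _, _ => nil_sublist _
  | u :: e, c :: s, d, .cons hc h, hf, hb => by
    obtain ⟨hdu, huN⟩ := hb u mem_cons_self
    have hlt : f u - 1 < (C.take N).length := by
      rw [length_take, Nat.lt_min]
      exact ⟨by omega, (getElem?_eq_some_iff.mp hc).1⟩
    have hc' : (C.take N)[f u - 1] = c := by
      rw [getElem_take]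
      exact (getElem?_eq_some_iff.mp hc).2
    have htail : s <+ (C.take N).drop (f u) :=
      sublist_drop_take_of_forall₂ h hf.of_cons fun v hv =>
        ⟨rel_of_pairwise_cons hf hv, (hb v (mem_cons_of_mem _ hv)).2⟩
    calc c :: s <+ c :: (C.take N).drop (f u) := htail.cons_cons c
      _ = (C.take N).drop (f u - 1) := by
        rw [drop_eq_getElem_cons hlt, hc', Nat.sub_add_cancel (by omega)]
      _ <+ (C.take N).drop d := drop_sublist_drop_left _ (by omega)

end List

section

open List

variable {α : Type*} {A B s : List α} {i j : ℕ}

theorem IsCommonSubseq.append {C D s₁ s₂ : List α} {p q : ℕ}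
    (h₁ : IsCommonSubseq (C.take p) (D.take q) s₁)
    (h₂ : IsCommonSubseq (C.drop p) (D.drop q) s₂) : IsCommonSubseq C D (s₁ ++ s₂) :=
  And.intro (by simpa only [take_append_drop] using h₁.1.append h₂.1)
    (by simpa only [take_append_drop] using h₁.2.append h₂.2)

theorem bddAbove_lengths_isCommonSubseq (A B : List α) (i j : ℕ) :
    BddAbove {k | ∃ s : List α, IsCommonSubseq (A.take i) (B.take j) s ∧ s.length = k} :=
  ⟨(A.take i).length, fun _ ⟨_, hs, hl⟩ => hl ▸ hs.1.length_le⟩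

theorem le_lcsL (h : IsCommonSubseq (A.take i) (B.take j) s) : s.length ≤ lcsL A B i j :=
  le_csSup (bddAbove_lengths_isCommonSubseq A B i j) ⟨s, h, rfl⟩

theorem exists_isLCS (A B : List α) (i j : ℕ) : ∃ s, IsLCS A B i j s :=
  Nat.sSup_mem (by exact ⟨0, [], And.intro (nil_sublist _) (nil_sublist _), rfl⟩)
    (bddAbove_lengths_isCommonSubseq A B i j)

namespace IsEmbedding

variable {e : List (ℕ × ℕ)}

theorem pairwise (he : IsEmbedding A B i j s e) :
    e.Pairwise (fun u v => u.1 < v.1 ∧ u.2 < v.2) :=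
  have : Trans (fun u v : ℕ × ℕ => u.1 < v.1 ∧ u.2 < v.2)
      (fun u v : ℕ × ℕ => u.1 < v.1 ∧ u.2 < v.2) (fun u v : ℕ × ℕ => u.1 < v.1 ∧ u.2 < v.2) :=
    ⟨fun h h' => ⟨h.1.trans h'.1, h.2.trans h'.2⟩⟩
  isChain_iff_pairwise.mp he.1

theorem isCommonSubseq_drop {p q : ℕ} (he : IsEmbedding A B i j s e)
    (hpq : ∀ u ∈ e, p < u.1 ∧ q < u.2) :
    IsCommonSubseq ((A.take i).drop p) ((B.take j).drop q) s :=
  ⟨sublist_drop_take_of_forall₂ (f := Prod.fst) (he.2.2.imp fun _ _ h => h.1)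
      (he.pairwise.imp And.left) fun u hu => ⟨(hpq u hu).1, (he.2.1 u hu).2.1⟩,
    sublist_drop_take_of_forall₂ (f := Prod.snd) (he.2.2.imp fun _ _ h => h.2)
      (he.pairwise.imp And.right) fun u hu => ⟨(hpq u hu).2, (he.2.1 u hu).2.2.2⟩⟩

theorem isCommonSubseq (he : IsEmbedding A B i j s e) :
    IsCommonSubseq (A.take i) (B.take j) s := by
  simpa only [drop_zero] using
    he.isCommonSubseq_drop fun u hu => ⟨(he.2.1 u hu).1, (he.2.1 u hu).2.2.1⟩

theorem take_succ (he : IsEmbedding A B i j s e) {t : ℕ} (ht : t < e.length) :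
    IsEmbedding A B e[t].1 e[t].2 (s.take (t + 1)) (e.take (t + 1)) := by
  refine ⟨he.1.take _, fun u hu => ?_, forall₂_take _ he.2.2⟩
  have hbound := he.2.1 u ((take_sublist _ _).mem hu)
  rw [take_add_one, getElem?_eq_getElem ht, Option.toList_some, mem_append,
    mem_singleton] at hu
  rcases hu with hu | rfl
  · have hlt := he.pairwise.rel_of_mem_take_of_mem_drop hu
      (drop_eq_getElem_cons ht ▸ mem_cons_self)
    omega
  · omega

theorem drop (he : IsEmbedding A B i j s e) (t : ℕ) :
    IsEmbedding A B i j (s.drop t) (e.drop t) :=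
  ⟨he.1.drop t, fun u hu => he.2.1 u (mem_of_mem_drop hu), forall₂_drop t he.2.2⟩

theorem lt_of_mem_drop (he : IsEmbedding A B i j s e) {t : ℕ} (ht : t < e.length) :
    ∀ u ∈ e.drop (t + 1), e[t].1 < u.1 ∧ e[t].2 < u.2 := fun _ hu =>
  he.pairwise.rel_of_mem_take_of_mem_drop
    (mem_take_iff_getElem.mpr ⟨t, by omega, rfl⟩) hu

end IsEmbedding

theorem IsLCS.lcsL_eq_of_isEmbedding {e : List (ℕ × ℕ)} (hs : IsLCS A B i j s)
    (he : IsEmbedding A B i j s e) {t : ℕ} (ht : t < e.length) :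
    lcsL A B e[t].1 e[t].2 = t + 1 := by
  have hlen : e.length = s.length := he.2.2.length_eq
  apply le_antisymm
  · obtain ⟨s', hs'⟩ := exists_isLCS A B e[t].1 e[t].2
    have hpi := he.2.1 _ (getElem_mem ht)
    have hprefix : IsCommonSubseq ((A.take i).take e[t].1) ((B.take j).take e[t].2) s' := by
      rw [take_take, take_take, min_eq_left hpi.2.1, min_eq_left hpi.2.2.2]
      exact hs'.1
    have hlong := le_lcsL <|
      hprefix.append ((he.drop (t + 1)).isCommonSubseq_drop (he.lt_of_mem_drop ht))
    rw [length_append, length_drop, hs'.2, ← hs.2] at hlong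
    omega
  · simpa [hlen, Nat.min_eq_left (show t + 1 ≤ s.length by omega)] using
      le_lcsL (he.take_succ ht).isCommonSubseq

end

theorem stmt_10_general {α : Type*} (A B : List α) (i j : ℕ)
    (s : List α) (hs : IsLCS A B i j s)
    (k : ℕ) (hk : k = lcsL A B i j)
    (e : List (ℕ × ℕ)) (he : IsEmbedding A B i j s e) :
    ∀ t, 1 ≤ t → t ≤ k →
      ∃ p q, e[t - 1]? = some (p, q) ∧ lcsL A B p q = t := by
  intro t ht1 htk
  have ht : t - 1 < e.length := by
    rw [he.2.2.length_eq, hs.2, ← hk]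
    omega
  refine ⟨e[t - 1].1, e[t - 1].2, List.getElem?_eq_getElem ht, ?_⟩
  rw [hs.lcsL_eq_of_isEmbedding he ht]
  omega

theorem stmt_10 {α : Type*} [DecidableEq α] (A B : List α) (m n : ℕ)
    (hA : A.length = m) (hB : B.length = n) (i j : ℕ)
    (him : i ≤ m) (hjn : j ≤ n) (s : List α) (hs : IsLCS A B i j s)
    (k : ℕ) (hk : k = lcsL A B i j)
    (e : List (ℕ × ℕ)) (he : IsEmbedding A B i j s e) :
    ∀ t, 1 ≤ t → t ≤ k →
      ∃ p q, e[t - 1]? = some (p, q) ∧ lcsL A B p q = t :=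
  stmt_10_general A B i j s hs k hk e he
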